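/- arXiv:2310.07735 — 2 statements merged into one kernel-verified Lean document; each statement's English description precedes it below -/
import Mathlib

section
/- For all n ≥ 1, p(n+1) - p(n) = 2 if and only if n lies in the range of p (i.e., n = p(k) for some k ≥ 1). -/
/-!
`p` is strictly increasing with gaps at most 2, and `p`, `q` partition the positive integers.
Counting `{1, …, q n}` gives `p (p n) = q n - 1` and `p (p n + 1) = q n + 1`, so the gap after
`p (p n)` is 2. Conversely, a gap of 2 after `p m` skips `p m + 1`, which must then be some
`q n = p (p n) + 1`, forcing `m = p n`.
-/

open Set

theorem add_eq_of_image_union_eq_Ici {f g : ℕ → ℕ} (hf : InjOn f (Ici 1)) (hg : InjOn g (Ici 1))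
    (hdisj : Disjoint (f '' Ici 1) (g '' Ici 1)) (hcover : f '' Ici 1 ∪ g '' Ici 1 = Ici 1)
    {M a b : ℕ} (ha : ∀ i, 1 ≤ i → (f i ≤ M ↔ i ≤ a)) (hb : ∀ i, 1 ≤ i → (g i ≤ M ↔ i ≤ b)) :
    a + b = M := by
  classical
  have hpos : ∀ m ∈ f '' Ici 1 ∪ g '' Ici 1, 1 ≤ m := fun m hm => by rwa [hcover] at hm
  have hIcc : Finset.Icc 1 M = (Finset.Icc 1 a).image f ∪ (Finset.Icc 1 b).image g := by
    ext m
    simp only [Finset.mem_Icc, Finset.mem_union, Finset.mem_image]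
    constructor
    · rintro ⟨h1, hM⟩
      have hm : m ∈ f '' Ici 1 ∪ g '' Ici 1 := by rw [hcover]; exact h1
      rcases hm with ⟨k, hk, rfl⟩ | ⟨k, hk, rfl⟩
      · exact .inl ⟨k, ⟨hk, (ha k hk).1 hM⟩, rfl⟩
      · exact .inr ⟨k, ⟨hk, (hb k hk).1 hM⟩, rfl⟩
    · rintro (⟨k, ⟨hk, hka⟩, rfl⟩ | ⟨k, ⟨hk, hkb⟩, rfl⟩)
      · exact ⟨hpos _ (.inl ⟨k, hk, rfl⟩), (ha k hk).2 hka⟩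
      · exact ⟨hpos _ (.inr ⟨k, hk, rfl⟩), (hb k hk).2 hkb⟩
  have hdisj' : Disjoint ((Finset.Icc 1 a).image f) ((Finset.Icc 1 b).image g) := by
    rw [← Finset.disjoint_coe, Finset.coe_image, Finset.coe_image]
    exact hdisj.mono (image_mono fun i hi => (Finset.mem_Icc.1 hi).1)
      (image_mono fun i hi => (Finset.mem_Icc.1 hi).1)
  have hcard := congrArg Finset.card hIcc
  rwa [Finset.card_union_of_disjoint hdisj', Finset.card_image_of_injOn
    (hf.mono fun i hi => (Finset.mem_Icc.1 hi).1), Finset.card_image_of_injOn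
    (hg.mono fun i hi => (Finset.mem_Icc.1 hi).1), Nat.card_Icc, Nat.card_Icc, Nat.card_Icc,
    Nat.add_sub_cancel, Nat.add_sub_cancel, Nat.add_sub_cancel, eq_comm] at hcard

namespace Wythoff

def unused (p q : ℕ → ℕ) (n : ℕ) : Set ℕ :=
  {m | 0 < m ∧ ∀ i, 1 ≤ i → i ≤ n → m ≠ p i ∧ m ≠ q i}

structure IsPair (p q : ℕ → ℕ) : Prop where
  one : p 1 = 1
  q_eq : ∀ n, 1 ≤ n → q n = p n + n
  isLeast_unused : ∀ n, 1 ≤ n → IsLeast (unused p q n) (p (n + 1))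

theorem unused_anti {p q : ℕ → ℕ} {m n : ℕ} (h : m ≤ n) : unused p q n ⊆ unused p q m :=
  fun _ hx => ⟨hx.1, fun i hi1 hi2 => hx.2 i hi1 (hi2.trans h)⟩

namespace IsPair

variable {p q : ℕ → ℕ}

theorem lt_succ (hW : IsPair p q) {n : ℕ} (hn : 1 ≤ n) : p n < p (n + 1) := by
  have hmem := (hW.isLeast_unused n hn).1
  have hle : p n ≤ p (n + 1) := by
    rcases hn.eq_or_lt with rfl | h
    · rw [hW.one]; exact hmem.1
    · obtain ⟨m, rfl⟩ : ∃ m, n = m + 1 := ⟨n - 1, by omega⟩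
      exact (hW.isLeast_unused m (by omega)).2 (unused_anti (Nat.le_succ m) hmem)
  exact hle.lt_of_ne (hmem.2 n hn le_rfl).1.symm

theorem strictMonoOn (hW : IsPair p q) : StrictMonoOn p (Ici 1) :=
  strictMonoOn_of_lt_add_one ordConnected_Ici fun _ _ ha _ => hW.lt_succ ha

theorem self_le (hW : IsPair p q) {n : ℕ} (hn : 1 ≤ n) : n ≤ p n := by
  induction n, hn using Nat.le_induction with
  | base => exact hW.one.ge
  | succ n hn ih => exact ih.trans_lt (hW.lt_succ hn)

theorem pos (hW : IsPair p q) {n : ℕ} (hn : 1 ≤ n) : 0 < p n :=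
  Nat.lt_of_lt_of_le hn (hW.self_le hn)

theorem q_add_two_le (hW : IsPair p q) {i j : ℕ} (hi : 1 ≤ i) (hij : i < j) :
    q i + 2 ≤ q j := by
  have := hW.strictMonoOn hi (le_trans hi hij.le : 1 ≤ j) hij
  rw [hW.q_eq i hi, hW.q_eq j (by omega)]
  omega

theorem q_strictMonoOn (hW : IsPair p q) : StrictMonoOn q (Ici 1) :=
  fun _ hi _ _ hij => by have := hW.q_add_two_le hi hij; omega

theorem p_ne_q (hW : IsPair p q) {k i : ℕ} (hk : 1 ≤ k) (hi : 1 ≤ i) : p k ≠ q i := by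
  rcases le_or_gt k i with h | h
  · have := hW.strictMonoOn.monotoneOn hk hi h
    rw [hW.q_eq i hi]
    omega
  · obtain ⟨m, rfl⟩ : ∃ m, k = m + 1 := ⟨k - 1, by omega⟩
    exact ((hW.isLeast_unused m (by omega)).1.2 i hi (by omega)).2

theorem succ_le_add_two (hW : IsPair p q) {n : ℕ} (hn : 1 ≤ n) : p (n + 1) ≤ p n + 2 := by
  have hp : ∀ d, 0 < d → ∀ i, 1 ≤ i → i ≤ n → p n + d ≠ p i := fun d hd i hi hin => by
    have := hW.strictMonoOn.monotoneOn hi hn hin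
    omega
  have hq : ∀ d, 0 < d → p n + d ∉ unused p q n → ∃ i, 1 ≤ i ∧ i ≤ n ∧ q i = p n + d :=
    fun d hd hnot => by
      by_contra! h
      exact hnot ⟨by omega, fun i hi hin => ⟨hp d hd i hi hin, (h i hi hin).symm⟩⟩
  -- otherwise `p n + 1` and `p n + 2` are both `q`-values, but distinct `q`-values differ by ≥ 2
  by_contra! hgt
  have hleast := (hW.isLeast_unused n hn).2
  obtain ⟨i, hi, -, hqi⟩ := hq 1 one_pos fun h => by have := hleast h; omega
  obtain ⟨j, hj, -, hqj⟩ := hq 2 two_pos fun h => by have := hleast h; omega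
  rcases lt_trichotomy i j with h | rfl | h
  · have := hW.q_add_two_le hi h; omega
  · omega
  · have := hW.q_add_two_le hj h; omega

theorem exists_eq_or_exists_q_eq (hW : IsPair p q) {m : ℕ} (hm : 1 ≤ m) :
    (∃ k, 1 ≤ k ∧ p k = m) ∨ ∃ i, 1 ≤ i ∧ q i = m := by
  by_contra! h
  have hmem : m ∈ unused p q m := ⟨hm, fun i hi _ => ⟨(h.1 i hi).symm, (h.2 i hi).symm⟩⟩
  have := (hW.isLeast_unused m hm).2 hmem
  have := hW.self_le (Nat.le_add_left 1 m)
  omega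

theorem image_union_image_eq_Ici (hW : IsPair p q) : p '' Ici 1 ∪ q '' Ici 1 = Ici 1 := by
  refine Subset.antisymm (union_subset ?_ ?_) fun m hm => ?_
  · rintro _ ⟨k, hk, rfl⟩
    exact hW.pos hk
  · rintro _ ⟨i, hi, rfl⟩
    rw [mem_Ici, hW.q_eq i hi]
    exact hi.trans (Nat.le_add_left i (p i))
  · rcases hW.exists_eq_or_exists_q_eq hm with ⟨k, hk, rfl⟩ | ⟨i, hi, rfl⟩
    exacts [.inl ⟨k, hk, rfl⟩, .inr ⟨i, hi, rfl⟩]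

theorem disjoint_image (hW : IsPair p q) : Disjoint (p '' Ici 1) (q '' Ici 1) := by
  rw [disjoint_left]
  rintro _ ⟨k, hk, rfl⟩ ⟨i, hi, hik⟩
  exact hW.p_ne_q hk hi hik.symm

theorem exists_le_iff_le (hW : IsPair p q) (M : ℕ) :
    ∃ a, ∀ i, 1 ≤ i → (p i ≤ M ↔ i ≤ a) := by
  refine ⟨Nat.findGreatest (p · ≤ M) M, fun i hi => ⟨fun h => ?_, fun h => ?_⟩⟩
  · exact Nat.le_findGreatest ((hW.self_le hi).trans h) h
  · exact (hW.strictMonoOn.monotoneOn hi (hi.trans h) h).trans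
      (Nat.findGreatest_of_ne_zero (P := (p · ≤ M)) rfl (by omega))

theorem p_p_le_and_lt (hW : IsPair p q) {n : ℕ} (hn : 1 ≤ n) :
    p (p n) ≤ q n ∧ q n < p (p n + 1) := by
  obtain ⟨a, ha⟩ := hW.exists_le_iff_le (q n)
  have hcount : a + n = q n :=
    add_eq_of_image_union_eq_Ici hW.strictMonoOn.injOn hW.q_strictMonoOn.injOn hW.disjoint_image
      hW.image_union_image_eq_Ici ha fun i hi => hW.q_strictMonoOn.le_iff_le hi hn
  obtain rfl : a = p n := by rw [hW.q_eq n hn] at hcount; omega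
  have hpn := hW.pos hn
  exact ⟨(ha _ hpn).2 le_rfl, lt_of_not_ge fun h => by have := (ha _ (by omega)).1 h; omega⟩

theorem p_p_add_one (hW : IsPair p q) {n : ℕ} (hn : 1 ≤ n) : p (p n) + 1 = q n := by
  have := hW.p_p_le_and_lt hn
  have := hW.p_ne_q (hW.pos hn) hn
  have := hW.succ_le_add_two (hW.pos hn)
  omega

theorem p_succ_p (hW : IsPair p q) {n : ℕ} (hn : 1 ≤ n) : p (p n + 1) = q n + 1 := by
  have := hW.p_p_le_and_lt hn
  have := hW.p_p_add_one hn
  have := hW.succ_le_add_two (hW.pos hn)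
  omega

theorem succ_eq_add_two_iff (hW : IsPair p q) {n : ℕ} (hn : 1 ≤ n) :
    p (n + 1) = p n + 2 ↔ ∃ k, 1 ≤ k ∧ p k = n := by
  constructor
  · intro h
    obtain ⟨k, hk, hpk⟩ | ⟨i, hi, hqi⟩ := hW.exists_eq_or_exists_q_eq (m := p n + 1) (by omega)
    · have h1 := (hW.strictMonoOn.lt_iff_lt hn hk).1 (by omega)
      have h2 := (hW.strictMonoOn.lt_iff_lt hk (by omega : 1 ≤ n + 1)).1 (by omega)
      omega
    · refine ⟨i, hi, hW.strictMonoOn.injOn (hW.pos hi) hn ?_⟩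
      have := hW.p_p_add_one hi
      omega
  · rintro ⟨k, hk, rfl⟩
    rw [hW.p_succ_p hk, ← hW.p_p_add_one hk]

end IsPair
end Wythoff

/-- Wythoff sequences: `p 1 = 1`, `q n = p n + n` for `n ≥ 1`, and `p (n+1)` is the
smallest positive integer not contained in `U_n = {p 1, …, p n, q 1, …, q n}`. -/
theorem stmt_7 (p q : ℕ → ℕ)
    (hp1 : p 1 = 1)
    (hq : ∀ n, 1 ≤ n → q n = p n + n)
    (hmin : ∀ n, 1 ≤ n →
      IsLeast {m : ℕ | 0 < m ∧ ∀ i, 1 ≤ i → i ≤ n → m ≠ p i ∧ m ≠ q i} (p (n + 1))) :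
    ∀ n, 1 ≤ n → (p (n + 1) = p n + 2 ↔ ∃ k, 1 ≤ k ∧ p k = n) :=
  fun _ => (Wythoff.IsPair.mk hp1 hq hmin).succ_eq_add_two_iff
end

section
/- For all n ≥ 1, q(p(n)) = p(n) + q(n) - 1. -/
/-!
The positive integers below `p m` are exactly `p 1, …, p (m - 1)` together with the values `q j`
below `p m`, and no value of `p` is a value of `q`. Since `q` is increasing, this gives
`p m = m + c` where `q j < p m ↔ j ≤ c`. For `m = p n`, i.e. `p (p n) = p n + c`, the inequality
`q c < p n + c` says `p c < p n`, so `c < n`, while `q (c + 1) > p n + c` says `p (c + 1) ≥ p n`,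
so `c + 1 ≥ n`. Hence `p (p n) = p n + n - 1`, which is the claim because `q = p + id`.
-/

structure IsWythoffPair (p q : ℕ → ℕ) : Prop where
  p_one : p 1 = 1
  q_eq : ∀ n, 1 ≤ n → q n = p n + n
  isLeast_p_succ : ∀ n, 1 ≤ n →
    IsLeast {m : ℕ | 0 < m ∧ ∀ i, 1 ≤ i → i ≤ n → m ≠ p i ∧ m ≠ q i} (p (n + 1))

theorem exists_lt_iff_le_of_monotoneOn {f : ℕ → ℕ} (hf : MonotoneOn f (Set.Ici 1))
    (hlt : ∀ j, 1 ≤ j → j < f j) (P : ℕ) : ∃ c, ∀ j, 1 ≤ j → (f j < P ↔ j ≤ c) := by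
  refine ⟨Nat.findGreatest (fun j => f j < P) P, fun j hj => ⟨fun hfj => ?_, fun hjc => ?_⟩⟩
  · exact Nat.le_findGreatest (by linarith [hlt j hj]) hfj
  · have hc : Nat.findGreatest (fun j => f j < P) P ≠ 0 := by omega
    exact (hf hj (le_trans hj hjc) hjc).trans_lt (Nat.findGreatest_of_ne_zero (P := fun j => f j < P) rfl hc)

namespace IsWythoffPair

variable {p q : ℕ → ℕ}

theorem one_le_p (h : IsWythoffPair p q) {n : ℕ} (hn : 1 ≤ n) : 1 ≤ p n := by
  obtain rfl | hn := hn.eq_or_lt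
  · exact h.p_one.ge
  · obtain ⟨k, rfl⟩ : ∃ k, n = k + 1 := ⟨n - 1, by omega⟩
    exact (h.isLeast_p_succ k (by omega)).1.1

theorem p_lt_p_succ (h : IsWythoffPair p q) {n : ℕ} (hn : 1 ≤ n) : p n < p (n + 1) := by
  have hne : p (n + 1) ≠ p n := ((h.isLeast_p_succ n hn).1.2 n hn le_rfl).1
  suffices p n ≤ p (n + 1) by omega
  obtain rfl | hn := hn.eq_or_lt
  · simpa [h.p_one] using h.one_le_p (n := 2) (by omega)
  · obtain ⟨k, rfl⟩ : ∃ k, n = k + 1 := ⟨n - 1, by omega⟩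
    refine (h.isLeast_p_succ (k + 1) hn.le).mono (h.isLeast_p_succ k (by omega)) ?_
    exact fun m ⟨hm, hfresh⟩ => ⟨hm, fun i hi hik => hfresh i hi (by omega)⟩

theorem strictMonoOn_p (h : IsWythoffPair p q) : StrictMonoOn p (Set.Ici 1) :=
  strictMonoOn_of_lt_succ Set.ordConnected_Ici fun _ _ hn _ => h.p_lt_p_succ hn

theorem strictMonoOn_q (h : IsWythoffPair p q) : StrictMonoOn q (Set.Ici 1) := by
  intro a ha b hb hab
  rw [h.q_eq a ha, h.q_eq b hb]
  exact add_lt_add (h.strictMonoOn_p ha hb hab) hab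

theorem p_ne_q (h : IsWythoffPair p q) {i j : ℕ} (hi : 1 ≤ i) (hj : 1 ≤ j) : p i ≠ q j := by
  rcases le_or_gt i j with hij | hji
  · have := h.strictMonoOn_p.monotoneOn hi hj hij
    rw [h.q_eq j hj]
    omega
  · obtain ⟨k, rfl⟩ : ∃ k, i = k + 1 := ⟨i - 1, by omega⟩
    exact ((h.isLeast_p_succ k (by omega)).1.2 j hj (by omega)).2

theorem exists_eq_p_or_eq_q_of_lt_p (h : IsWythoffPair p q) {m k : ℕ} (hm : 1 ≤ m)
    (hk : 1 ≤ k) (hkm : k < p m) : ∃ i, 1 ≤ i ∧ i < m ∧ (k = p i ∨ k = q i) := by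
  obtain ⟨n, rfl⟩ : ∃ n, m = n + 1 := ⟨m - 1, by omega⟩
  obtain rfl | hn := Nat.eq_zero_or_pos n
  · rw [h.p_one] at hkm
    omega
  by_contra! hfresh
  have := (h.isLeast_p_succ n hn).2 ⟨hk, fun i hi hin => hfresh i hi (by omega)⟩
  omega

theorem exists_p_eq_add_of_q_lt_iff (h : IsWythoffPair p q) {m : ℕ} (hm : 1 ≤ m) :
    ∃ c, p m = m + c ∧ ∀ j, 1 ≤ j → (q j < p m ↔ j ≤ c) := by
  have hq_gt : ∀ j, 1 ≤ j → j < q j := fun j hj => by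
    have := h.one_le_p hj
    rw [h.q_eq j hj]
    omega
  obtain ⟨c, hc⟩ := exists_lt_iff_le_of_monotoneOn h.strictMonoOn_q.monotoneOn hq_gt (p m)
  refine ⟨c, ?_, hc⟩
  have hsplit : Finset.Ico 1 (p m) = (Finset.Ico 1 m).image p ∪ (Finset.Icc 1 c).image q := by
    ext k
    simp only [Finset.mem_Ico, Finset.mem_union, Finset.mem_image, Finset.mem_Icc]
    constructor
    · rintro ⟨hk, hkm⟩
      obtain ⟨i, hi, him, rfl | rfl⟩ := h.exists_eq_p_or_eq_q_of_lt_p hm hk hkm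
      · exact Or.inl ⟨i, ⟨hi, him⟩, rfl⟩
      · exact Or.inr ⟨i, ⟨hi, (hc i hi).1 hkm⟩, rfl⟩
    · rintro (⟨i, ⟨hi, him⟩, rfl⟩ | ⟨j, ⟨hj, hjc⟩, rfl⟩)
      · exact ⟨h.one_le_p hi, h.strictMonoOn_p hi hm him⟩
      · exact ⟨by linarith [hq_gt j hj], (hc j hj).2 hjc⟩
  have hdisj : Disjoint ((Finset.Ico 1 m).image p) ((Finset.Icc 1 c).image q) := by
    simp only [Finset.disjoint_left, Finset.mem_image, Finset.mem_Ico, Finset.mem_Icc]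
    rintro _ ⟨i, ⟨hi, -⟩, rfl⟩ ⟨j, ⟨hj, -⟩, hji⟩
    exact h.p_ne_q hi hj hji.symm
  have hcard := congrArg Finset.card hsplit
  rw [Finset.card_union_of_disjoint hdisj,
    Finset.card_image_of_injOn (h.strictMonoOn_p.injOn.mono fun i hi => ?_),
    Finset.card_image_of_injOn (h.strictMonoOn_q.injOn.mono fun j hj => ?_)] at hcard
  · simp only [Nat.card_Ico, Nat.card_Icc] at hcard
    have := h.one_le_p hm
    omega
  · exact (Finset.mem_Icc.1 hj).1
  · exact (Finset.mem_Ico.1 hi).1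

theorem p_p_eq (h : IsWythoffPair p q) {n : ℕ} (hn : 1 ≤ n) : p (p n) = p n + n - 1 := by
  have hpn := h.one_le_p hn
  obtain ⟨c, hpp, hc⟩ := h.exists_p_eq_add_of_q_lt_iff hpn
  have hc_lt : c < n := by
    by_contra! hnc
    have hqc := (hc c (by omega)).2 le_rfl
    rw [h.q_eq c (by omega), hpp] at hqc
    have := h.strictMonoOn_p.monotoneOn hn (show 1 ≤ c by omega) hnc
    omega
  have hc_ge : n ≤ c + 1 := by
    by_contra! hcn
    have hqc : p (p n) < q (c + 1) := lt_of_le_of_ne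
      (not_lt.1 fun hlt => by have := (hc (c + 1) (by omega)).1 hlt; omega)
      (h.p_ne_q hpn (by omega))
    rw [h.q_eq (c + 1) (by omega), hpp] at hqc
    have := h.strictMonoOn_p (show 1 ≤ c + 1 by omega) hn hcn
    omega
  omega

end IsWythoffPair

/-- Wythoff sequences: `p 1 = 1`, `q n = p n + n` for `n ≥ 1`, and `p (n+1)` is the
smallest positive integer not contained in `U_n = {p 1, …, p n, q 1, …, q n}`. -/
theorem stmt_9 (p q : ℕ → ℕ)
    (hp1 : p 1 = 1)
    (hq : ∀ n, 1 ≤ n → q n = p n + n)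
    (hmin : ∀ n, 1 ≤ n →
      IsLeast {m : ℕ | 0 < m ∧ ∀ i, 1 ≤ i → i ≤ n → m ≠ p i ∧ m ≠ q i} (p (n + 1))) :
    ∀ n, 1 ≤ n → q (p n) = p n + q n - 1 := by
  have h : IsWythoffPair p q := ⟨hp1, hq, hmin⟩
  intro n hn
  rw [hq (p n) (h.one_le_p hn), h.p_p_eq hn, hq n hn]
  have := h.one_le_p hn
  omega
end
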